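/- Suppose ρ_i and β_i are continuous on [0, b̄_i] for every i ∈ I and p is finite on all of ℝ^K. Let λ* be a minimizer of the dual function Q over ℝ^K, and suppose that for every i ∈ I the set V_i := { v_i(x_i, b_i) : (x_i, b_i) ∈ S_i*(λ*) } ⊆ ℝ^K is convex. Then there exists (x*, b*) ∈ S maximizing (x,b) ↦ π(x,b) − (λ*)ᵀ v(x,b) over S such that F(x*, b*) = Q(λ*). -/

import Mathlib

/-!
Near `λ*` the dual function is a finite sum of maxima `M_i(λ) = max_{y ∈ A_i} (c_i y - λ ⬝ᵥ w_i y)`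
over compact sets: one for each impression type (after zeroing the coordinates off the edges of
`i`) and one for the conjugate `p`, whose supremum is attained on a fixed ball because `p` is
finite, hence continuous, near `λ*`. If such a sum has a local minimum at `λ*`, then for every
direction `d` there are maximisers `y_i` with `∑ i, d ⬝ᵥ w_i y_i ≤ 0`: otherwise a small step
along `d` would strictly decrease every `M_i` to first order. When the sets `V_i` of constraint
values of maximisers are convex, the compact convex set `∑ i, V_i` therefore contains `0` by
separation. A choice of maximisers with `∑ i, w_i y_i = 0` is a primal plan whose usage `z`
maximises `λ* ⬝ᵥ z + u z`, and then `F = Q(λ*)`.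
-/

open Filter Topology Set Metric

theorem ConcaveOn.convex_setOf_isMaxOn {𝕜 E β : Type*} [Semiring 𝕜] [PartialOrder 𝕜]
    [AddCommMonoid E] [AddCommMonoid β] [PartialOrder β] [IsOrderedAddMonoid β] [SMul 𝕜 E]
    [Module 𝕜 β] [PosSMulMono 𝕜 β] {s : Set E} {f : E → β} (hf : ConcaveOn 𝕜 s f) :
    Convex 𝕜 {y ∈ s | IsMaxOn f s y} := by
  have hset : {y ∈ s | IsMaxOn f s y} = s ∩ ⋂ z ∈ s, {y ∈ s | f z ≤ f y} := by
    ext y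
    simp only [mem_sep_iff, mem_inter_iff, mem_iInter]
    exact ⟨fun h => ⟨h.1, fun z hz => ⟨h.1, h.2 hz⟩⟩, fun h => ⟨h.1, fun z hz => (h.2 z hz).2⟩⟩
  rw [hset]
  exact hf.1.inter (convex_iInter₂ fun z _ => hf.convex_ge (f z))

theorem sq_norm_le_dotProduct_self {K : Type*} [Fintype K] (z : K → ℝ) : ‖z‖ ^ 2 ≤ z ⬝ᵥ z := by
  have hz : ‖z‖ ≤ √(z ⬝ᵥ z) := (pi_norm_le_iff_of_nonneg (Real.sqrt_nonneg _)).2 fun k =>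
    Real.abs_le_sqrt <| by
      simpa [sq, dotProduct] using
        Finset.single_le_sum (fun j _ => mul_self_nonneg (z j)) (Finset.mem_univ k)
  calc ‖z‖ ^ 2 ≤ √(z ⬝ᵥ z) ^ 2 := by gcongr
    _ = z ⬝ᵥ z := Real.sq_sqrt (Finset.sum_nonneg fun j _ => mul_self_nonneg (z j))

theorem exists_dotProduct_pos_of_notMem {K : Type*} [Fintype K] {W : Set (K → ℝ)}
    (hconv : Convex ℝ W) (hW : IsClosed W) (h0 : (0 : K → ℝ) ∉ W) :
    ∃ d : K → ℝ, ∀ v ∈ W, 0 < d ⬝ᵥ v := by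
  classical
  obtain ⟨f, s, hf0, hfW⟩ := geometric_hahn_banach_point_closed hconv hW h0
  set d : K → ℝ := fun k => f fun j => if k = j then 1 else 0
  refine ⟨d, fun v hv => ?_⟩
  have hf : f v = d ⬝ᵥ v := by
    rw [dotProduct_comm]
    exact LinearMap.pi_apply_eq_sum_univ f.toLinearMap v
  rw [map_zero] at hf0
  linarith [hfW v hv]

instance {X Y : Type*} [TopologicalSpace X] [TopologicalSpace Y] [FirstCountableTopology X]
    [FirstCountableTopology Y] : FirstCountableTopology (X ⊕ Y) where
  nhds_generated_countable
    | .inl x => by rw [nhds_inl]; infer_instance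
    | .inr y => by rw [nhds_inr]; infer_instance

theorem image_setOf_isMaxOn_image {α β γ δ : Type*} [Preorder γ] (f : α → β) (g : β → γ)
    (v : β → δ) (s : Set α) :
    v '' {y ∈ f '' s | IsMaxOn g (f '' s) y} = (v ∘ f) '' {x ∈ s | IsMaxOn (g ∘ f) s x} := by
  ext
  constructor
  · rintro ⟨_, ⟨⟨x, hx, rfl⟩, hmax⟩, rfl⟩
    exact ⟨x, ⟨hx, hmax.comp_mapsTo (mapsTo_image f s) rfl⟩, rfl⟩
  · rintro ⟨x, ⟨hx, hmax⟩, rfl⟩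
    exact ⟨f x, ⟨mem_image_of_mem f hx, forall_mem_image.2 hmax⟩, rfl⟩

theorem EReal.biSup_coe_eq_of_isMaxOn {α : Type*} {f : α → ℝ} {s : Set α} {a : α}
    (ha : a ∈ s) (h : IsMaxOn f s a) : ⨆ x ∈ s, (f x : EReal) = f a :=
  le_antisymm (iSup₂_le fun _ hx => EReal.coe_le_coe (h hx)) (le_iSup₂_of_le a ha le_rfl)

theorem EReal.iSup_coe_eq_coe_ciSup {α : Type*} [Nonempty α] {f : α → ℝ}
    (h : ⨆ x, (f x : EReal) ≠ ⊤) : BddAbove (range f) ∧ ⨆ x, (f x : EReal) = ↑(⨆ x, f x) := by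
  set m := ⨆ x, (f x : EReal)
  have hle : ∀ x, (f x : EReal) ≤ m := le_iSup _
  have hbot : m ≠ ⊥ := ne_bot_of_le_ne_bot (EReal.coe_ne_bot _) (hle (Classical.arbitrary α))
  have hbdd : ∀ x, f x ≤ m.toReal := fun x =>
    EReal.coe_le_coe_iff.1 ((hle x).trans_eq (EReal.coe_toReal h hbot).symm)
  refine ⟨⟨m.toReal, forall_mem_range.2 hbdd⟩, le_antisymm ?_ ?_⟩
  · exact iSup_le fun x => EReal.coe_le_coe (le_ciSup ⟨m.toReal, forall_mem_range.2 hbdd⟩ x)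
  · rw [← EReal.coe_toReal h hbot]
    exact EReal.coe_le_coe (ciSup_le hbdd)

section LagrangeDual

variable {X K : Type*} [Fintype K]

-- an `sSup`, hence meaningful only when the image is bounded above, e.g. for compact `A`
noncomputable def lagrangeDual (A : Set X) (c : X → ℝ) (w : X → K → ℝ) (μ : K → ℝ) : ℝ :=
  sSup ((fun y => c y - μ ⬝ᵥ w y) '' A)

variable {A : Set X} {c : X → ℝ} {w : X → K → ℝ}

theorem lagrangeDual_eq_of_isMaxOn {μ : K → ℝ} {y : X} (hy : y ∈ A)
    (hmax : IsMaxOn (fun z => c z - μ ⬝ᵥ w z) A y) : lagrangeDual A c w μ = c y - μ ⬝ᵥ w y :=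
  IsGreatest.csSup_eq ⟨mem_image_of_mem _ hy, forall_mem_image.2 hmax⟩

theorem lagrangeDual_image {Y : Type*} (f : Y → X) (A : Set Y) (c : X → ℝ) (w : X → K → ℝ)
    (μ : K → ℝ) : lagrangeDual (f '' A) c w μ = lagrangeDual A (c ∘ f) (w ∘ f) μ := by
  rw [lagrangeDual, lagrangeDual, image_image]; rfl

variable [TopologicalSpace X]

theorem continuousOn_lagrangian (hc : ContinuousOn c A) (hw : ContinuousOn w A) :
    ContinuousOn (fun q : (K → ℝ) × X => c q.2 - q.1 ⬝ᵥ w q.2) (univ ×ˢ A) := by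
  have hA : MapsTo Prod.snd (univ ×ˢ A : Set ((K → ℝ) × X)) A := fun q hq => hq.2
  refine (hc.comp continuousOn_snd hA).sub ?_
  exact continuousOn_finsetSum _ fun k _ =>
    ((continuous_apply k).comp continuous_fst).continuousOn.mul
      ((continuous_apply k).comp_continuousOn (hw.comp continuousOn_snd hA))

theorem ContinuousOn.lagrangian (hc : ContinuousOn c A) (hw : ContinuousOn w A) (μ : K → ℝ) :
    ContinuousOn (fun z => c z - μ ⬝ᵥ w z) A :=
  (continuousOn_lagrangian hc hw).comp (continuousOn_const.prodMk continuousOn_id)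
    fun _ hz => ⟨trivial, hz⟩

theorem lagrangeDual_add_smul_le (hA : IsCompact A) (hc : ContinuousOn c A)
    (hw : ContinuousOn w A) {μ d : K → ℝ} {t : ℝ} {y : X} (hy : y ∈ A)
    (hmax : IsMaxOn (fun z => c z - (μ + t • d) ⬝ᵥ w z) A y) :
    lagrangeDual A c w (μ + t • d) ≤ lagrangeDual A c w μ - t * (d ⬝ᵥ w y) := by
  have hle : c y - μ ⬝ᵥ w y ≤ lagrangeDual A c w μ :=
    le_csSup (hA.bddAbove_image (hc.lagrangian hw μ)) (mem_image_of_mem _ hy)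
  rw [lagrangeDual_eq_of_isMaxOn hy hmax, add_dotProduct, smul_dotProduct, smul_eq_mul]
  linarith

theorem isMaxOn_lagrangian_of_tendsto {α : Type*} {l : Filter α} [l.NeBot]
    (hc : ContinuousOn c A) (hw : ContinuousOn w A) {μ : α → K → ℝ} {y : α → X}
    {μ₀ : K → ℝ} {y₀ : X} (hyA : ∀ n, y n ∈ A)
    (hmax : ∀ n, IsMaxOn (fun z => c z - μ n ⬝ᵥ w z) A (y n)) (hy₀ : y₀ ∈ A)
    (hμ : Tendsto μ l (𝓝 μ₀)) (hy : Tendsto y l (𝓝 y₀)) :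
    IsMaxOn (fun z => c z - μ₀ ⬝ᵥ w z) A y₀ := by
  have hL := continuousOn_lagrangian hc hw
  intro z hz
  have hz_lim : Tendsto (fun n => c z - μ n ⬝ᵥ w z) l (𝓝 (c z - μ₀ ⬝ᵥ w z)) :=
    (hL (μ₀, z) ⟨trivial, hz⟩).tendsto.comp <| tendsto_nhdsWithin_iff.2
      ⟨hμ.prodMk_nhds tendsto_const_nhds, .of_forall fun _ => ⟨trivial, hz⟩⟩
  have hy_lim : Tendsto (fun n => c (y n) - μ n ⬝ᵥ w (y n)) l (𝓝 (c y₀ - μ₀ ⬝ᵥ w y₀)) :=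
    (hL (μ₀, y₀) ⟨trivial, hy₀⟩).tendsto.comp <| tendsto_nhdsWithin_iff.2
      ⟨hμ.prodMk_nhds hy, .of_forall fun n => ⟨trivial, hyA n⟩⟩
  exact le_of_tendsto_of_tendsto' hz_lim hy_lim fun n => hmax n hz

theorem IsCompact.setOf_isMaxOn [T2Space X] (hA : IsCompact A) {f : X → ℝ}
    (hf : ContinuousOn f A) : IsCompact {y ∈ A | IsMaxOn f A y} := by
  have hset : {y ∈ A | IsMaxOn f A y} = A ∩ ⋂ z ∈ A, A ∩ f ⁻¹' Ici (f z) := by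
    ext y
    simp only [mem_sep_iff, mem_inter_iff, mem_iInter, mem_preimage, mem_Ici]
    exact ⟨fun h => ⟨h.1, fun z hz => ⟨h.1, h.2 hz⟩⟩, fun h => ⟨h.1, fun z hz => (h.2 z hz).2⟩⟩
  rw [hset]
  exact hA.of_isClosed_subset (hA.isClosed.inter <| isClosed_biInter fun z _ =>
    hf.preimage_isClosed_of_isClosed hA.isClosed isClosed_Ici) inter_subset_left

end LagrangeDual

section Danskin

variable {X ι K : Type*} [TopologicalSpace X] [Fintype ι] [Fintype K]
  {A : ι → Set X} {c : ι → X → ℝ} {w : ι → X → K → ℝ} {lam : K → ℝ}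

theorem exists_isMaxOn_sum_dotProduct_nonpos_of_isLocalMin [FirstCountableTopology X]
    (hA : ∀ i, IsCompact (A i)) (hne : ∀ i, (A i).Nonempty)
    (hc : ∀ i, ContinuousOn (c i) (A i)) (hw : ∀ i, ContinuousOn (w i) (A i))
    (hmin : IsLocalMin (fun μ => ∑ i, lagrangeDual (A i) (c i) (w i) μ) lam) (d : K → ℝ) :
    ∃ y : ι → X, (∀ i, y i ∈ A i ∧ IsMaxOn (fun z => c i z - lam ⬝ᵥ w i z) (A i) (y i)) ∧
      ∑ i, d ⬝ᵥ w i (y i) ≤ 0 := by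
  set t : ℕ → ℝ := fun n => 1 / (n + 1)
  have ht : Tendsto t atTop (𝓝 0) := tendsto_one_div_add_atTop_nhds_zero_nat
  have ht_pos : ∀ n, 0 < t n := fun n => Nat.one_div_pos_of_nat
  set μ : ℕ → K → ℝ := fun n => lam + t n • d
  have hμ : Tendsto μ atTop (𝓝 lam) := by
    simpa [μ] using tendsto_const_nhds.add (ht.smul_const d)
  choose y hyA hymax using fun n i =>
    (hA i).exists_isMaxOn (hne i) ((hc i).lagrangian (hw i) (μ n))
  -- minimality of the dual at `lam` against its first-order decrease along `d`
  have hneg : ∀ᶠ n in atTop, ∑ i, d ⬝ᵥ w i (y n i) ≤ 0 := by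
    filter_upwards [hμ.eventually hmin] with n hn
    have hle := hn.trans <| Finset.sum_le_sum fun i _ =>
      lagrangeDual_add_smul_le (hA i) (hc i) (hw i) (hyA n i) (hymax n i)
    rw [Finset.sum_sub_distrib, ← Finset.mul_sum] at hle
    nlinarith [ht_pos n]
  obtain ⟨y₀, hy₀, ψ, hψ, hlim⟩ := (isCompact_univ_pi hA).tendsto_subseq fun n i _ => hyA n i
  have hlim_i : ∀ i, Tendsto (fun n => y (ψ n) i) atTop (𝓝 (y₀ i)) :=
    fun i => ((continuous_apply i).tendsto y₀).comp hlim
  refine ⟨y₀, fun i => ⟨hy₀ i trivial, isMaxOn_lagrangian_of_tendsto (hc i) (hw i)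
    (fun n => hyA (ψ n) i) (fun n => hymax (ψ n) i) (hy₀ i trivial)
    (hμ.comp hψ.tendsto_atTop) (hlim_i i)⟩, le_of_tendsto ?_ (hψ.tendsto_atTop.eventually hneg)⟩
  refine tendsto_finsetSum _ fun i _ =>
    ((continuous_const.dotProduct continuous_id).tendsto _).comp ?_
  exact (hw i _ (hy₀ i trivial)).tendsto.comp <| tendsto_nhdsWithin_iff.2
    ⟨hlim_i i, .of_forall fun n => hyA (ψ n) i⟩

theorem exists_isMaxOn_sum_eq_zero_of_isLocalMin [T2Space X] [FirstCountableTopology X]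
    (hA : ∀ i, IsCompact (A i)) (hne : ∀ i, (A i).Nonempty)
    (hc : ∀ i, ContinuousOn (c i) (A i)) (hw : ∀ i, ContinuousOn (w i) (A i))
    (hmin : IsLocalMin (fun μ => ∑ i, lagrangeDual (A i) (c i) (w i) μ) lam)
    (hconv : ∀ i, Convex ℝ
      (w i '' {y ∈ A i | IsMaxOn (fun z => c i z - lam ⬝ᵥ w i z) (A i) y})) :
    ∃ y : ι → X, (∀ i, y i ∈ A i ∧ IsMaxOn (fun z => c i z - lam ⬝ᵥ w i z) (A i) (y i)) ∧
      ∑ i, w i (y i) = 0 := by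
  set V : ι → Set (K → ℝ) := fun i =>
    w i '' {y ∈ A i | IsMaxOn (fun z => c i z - lam ⬝ᵥ w i z) (A i) y}
  set total : (ι → K → ℝ) →ₗ[ℝ] K → ℝ := ∑ i, LinearMap.proj i
  have htotal : ∀ v, total v = ∑ i, v i := fun v => by simp [total]
  have hV : ∀ i, IsCompact (V i) := fun i =>
    ((hA i).setOf_isMaxOn ((hc i).lagrangian (hw i) lam)).image_of_continuousOn
      ((hw i).mono fun _ hy => hy.1)
  have hW : IsCompact (total '' univ.pi V) :=
    (isCompact_univ_pi hV).image total.continuous_of_finiteDimensional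
  have h0 : (0 : K → ℝ) ∈ total '' univ.pi V := by
    by_contra h0
    obtain ⟨d, hd⟩ := exists_dotProduct_pos_of_notMem
      ((convex_pi fun i _ => hconv i).linear_image total) hW.isClosed h0
    obtain ⟨y, hy, hneg⟩ := exists_isMaxOn_sum_dotProduct_nonpos_of_isLocalMin hA hne hc hw hmin d
    have hpos := hd _ ⟨fun i => w i (y i), fun i _ => ⟨y i, hy i, rfl⟩, rfl⟩
    rw [htotal, dotProduct_sum] at hpos
    exact hneg.not_gt hpos
  obtain ⟨v, hv, hv0⟩ := h0
  choose y hy hyv using fun i => hv i trivial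
  exact ⟨y, hy, by simp only [hyv, ← htotal, hv0]⟩

end Danskin

section Conjugate

variable {K : Type*} [Fintype K] {u : (K → ℝ) → ℝ}

noncomputable def conjugate (u : (K → ℝ) → ℝ) (μ : K → ℝ) : ℝ :=
  ⨆ z, μ ⬝ᵥ z + u z

theorem ConcaveOn.sub_dotProduct_neg (hu : ConcaveOn ℝ univ u) {B : Set (K → ℝ)}
    (hB : Convex ℝ B) (μ : K → ℝ) : ConcaveOn ℝ B fun z => u z - μ ⬝ᵥ -z := by
  have hfun : (fun z => u z - μ ⬝ᵥ -z) = u + dotProductBilin ℝ ℝ μ := by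
    ext z; simp
  rw [hfun]
  exact (hu.subset (subset_univ _) hB).add ((dotProductBilin ℝ ℝ μ).concaveOn hB)

variable (hbdd : ∀ μ, BddAbove (range fun z => μ ⬝ᵥ z + u z))
include hbdd

theorem le_conjugate (μ z : K → ℝ) : μ ⬝ᵥ z + u z ≤ conjugate u μ :=
  le_ciSup (hbdd μ) z

theorem convexOn_conjugate : ConvexOn ℝ univ (conjugate u) := by
  refine ⟨convex_univ, fun μ _ ν _ a b ha hb hab => ciSup_le fun z => ?_⟩
  have hsplit : (a • μ + b • ν) ⬝ᵥ z + u z = a * (μ ⬝ᵥ z + u z) + b * (ν ⬝ᵥ z + u z) := by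
    rw [add_dotProduct, smul_dotProduct, smul_dotProduct, smul_eq_mul, smul_eq_mul]
    linear_combination (-u z) * hab
  rw [hsplit, smul_eq_mul, smul_eq_mul]
  gcongr <;> exact le_conjugate hbdd _ z

theorem conjugate_eq_of_isMaxOn {μ z : K → ℝ}
    (hmax : IsMaxOn (fun z => μ ⬝ᵥ z + u z) univ z) : conjugate u μ = μ ⬝ᵥ z + u z :=
  le_antisymm (ciSup_le fun z' => hmax (mem_univ z')) (le_conjugate hbdd μ z)

theorem lagrangeDual_neg_eq_conjugate {B : Set (K → ℝ)} {μ z : K → ℝ} (hz : z ∈ B)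
    (hmax : IsMaxOn (fun z => μ ⬝ᵥ z + u z) univ z) :
    lagrangeDual B u Neg.neg μ = conjugate u μ := by
  rw [lagrangeDual_eq_of_isMaxOn hz, conjugate_eq_of_isMaxOn hbdd hmax]
  · simp [dotProduct_neg, add_comm]
  · intro z' _
    simpa [dotProduct_neg, add_comm] using hmax (mem_univ z')

theorem continuous_conjugate : Continuous (conjugate u) :=
  continuousOn_univ.1 <| (convexOn_conjugate hbdd).continuousOn isOpen_univ

theorem dotProduct_add_le_of_lt_norm {lam μ z : K → ℝ} {C : ℝ}
    (hC : ∀ ν ∈ closedBall lam 2, conjugate u ν ≤ C) (hμ : μ ∈ closedBall lam 1)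
    (hz : C - u 0 < ‖z‖) : μ ⬝ᵥ z + u z ≤ u 0 := by
  rcases eq_or_ne z 0 with rfl | hz0
  · simp
  have hnorm : 0 < ‖z‖ := norm_pos_iff.2 hz0
  -- tilting the prices by `z / ‖z‖` raises the objective at `z` by at least `‖z‖`
  set ν := μ + ‖z‖⁻¹ • z
  have hν : ν ∈ closedBall lam 2 := by
    rw [mem_closedBall] at hμ ⊢
    have hstep : dist ν μ = 1 := by
      rw [dist_self_add_left, norm_smul, norm_inv, norm_norm, inv_mul_cancel₀ hnorm.ne']
    linarith [dist_triangle ν μ lam]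
  have htilt : μ ⬝ᵥ z + ‖z‖ ≤ ν ⬝ᵥ z := by
    rw [add_dotProduct, smul_dotProduct, smul_eq_mul, add_le_add_iff_left,
      le_inv_mul_iff₀ hnorm, ← sq]
    exact sq_norm_le_dotProduct_self z
  linarith [le_conjugate hbdd ν z, hC ν hν]

theorem exists_closedBall_isMaxOn_dotProduct_add (hu : Continuous u) (lam : K → ℝ) :
    ∃ R, 0 ≤ R ∧ ∀ μ ∈ closedBall lam 1,
      ∃ z ∈ closedBall (0 : K → ℝ) R, IsMaxOn (fun z => μ ⬝ᵥ z + u z) univ z := by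
  obtain ⟨C, hC⟩ := (isCompact_closedBall lam 2).bddAbove_image
    (continuous_conjugate hbdd).continuousOn
  refine ⟨max 0 (C - u 0), le_max_left _ _, fun μ hμ => ?_⟩
  have hcont : Continuous fun z => μ ⬝ᵥ z + u z :=
    (continuous_const.dotProduct continuous_id).add hu
  obtain ⟨z₀, hz₀, hmax⟩ := (isCompact_closedBall (0 : K → ℝ) (max 0 (C - u 0))).exists_isMaxOn
    ⟨0, mem_closedBall_self (le_max_left _ _)⟩ hcont.continuousOn
  refine ⟨z₀, hz₀, fun z _ => show μ ⬝ᵥ z + u z ≤ μ ⬝ᵥ z₀ + u z₀ from ?_⟩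
  by_cases hz : ‖z‖ ≤ max 0 (C - u 0)
  · exact hmax (mem_closedBall_zero_iff.2 hz)
  · have h0 : μ ⬝ᵥ 0 + u 0 ≤ μ ⬝ᵥ z₀ + u z₀ := hmax (mem_closedBall_self (le_max_left _ _))
    have := dotProduct_add_le_of_lt_norm hbdd (fun ν hν => hC ⟨ν, hν, rfl⟩) hμ
      ((le_max_right _ _).trans_lt (not_le.1 hz))
    rw [dotProduct_zero, zero_add] at h0
    linarith

end Conjugate

section StrongDuality

variable {X ι K : Type*} [TopologicalSpace X] [T2Space X] [FirstCountableTopology X]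
  [Fintype ι] [Fintype K] {A : ι → Set X} {c : ι → X → ℝ} {w : ι → X → K → ℝ} {lam : K → ℝ}

theorem exists_isMaxOn_sum_add_eq_zero_of_isLocalMin {Y : Type*} [TopologicalSpace Y]
    [T2Space Y] [FirstCountableTopology Y] {B : Set Y} {c₀ : Y → ℝ} {w₀ : Y → K → ℝ}
    (hA : ∀ i, IsCompact (A i)) (hne : ∀ i, (A i).Nonempty)
    (hc : ∀ i, ContinuousOn (c i) (A i)) (hw : ∀ i, ContinuousOn (w i) (A i))
    (hB : IsCompact B) (hBne : B.Nonempty) (hc₀ : ContinuousOn c₀ B) (hw₀ : ContinuousOn w₀ B)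
    (hmin : IsLocalMin
      (fun μ => ∑ i, lagrangeDual (A i) (c i) (w i) μ + lagrangeDual B c₀ w₀ μ) lam)
    (hconv : ∀ i, Convex ℝ
      (w i '' {y ∈ A i | IsMaxOn (fun z => c i z - lam ⬝ᵥ w i z) (A i) y}))
    (hconv₀ : Convex ℝ (w₀ '' {z ∈ B | IsMaxOn (fun z => c₀ z - lam ⬝ᵥ w₀ z) B z})) :
    ∃ (y : ι → X) (z : Y), (∀ i, y i ∈ A i ∧ IsMaxOn (fun z => c i z - lam ⬝ᵥ w i z) (A i) (y i)) ∧
      IsMaxOn (fun z => c₀ z - lam ⬝ᵥ w₀ z) B z ∧ ∑ i, w i (y i) + w₀ z = 0 := by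
  -- all components are placed side by side in `X ⊕ Y`, the extra one indexed by `none`
  set A' : Option ι → Set (X ⊕ Y) := fun o => o.elim (Sum.inr '' B) fun i => Sum.inl '' A i
  set c' : Option ι → X ⊕ Y → ℝ := fun o => o.elim (Sum.elim 0 c₀) fun i => Sum.elim (c i) 0
  set w' : Option ι → X ⊕ Y → K → ℝ := fun o =>
    o.elim (Sum.elim 0 w₀) fun i => Sum.elim (w i) 0
  have hA' : ∀ o, IsCompact (A' o) := by
    rintro (_ | i)
    exacts [hB.image continuous_inr, (hA i).image continuous_inl]
  have hne' : ∀ o, (A' o).Nonempty := by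
    rintro (_ | i)
    exacts [hBne.image _, (hne i).image _]
  have hc' : ∀ o, ContinuousOn (c' o) (A' o) := by
    rintro (_ | i)
    exacts [IsEmbedding.inr.isInducing.continuousOn_image_iff.2 hc₀,
      IsEmbedding.inl.isInducing.continuousOn_image_iff.2 (hc i)]
  have hw' : ∀ o, ContinuousOn (w' o) (A' o) := by
    rintro (_ | i)
    exacts [IsEmbedding.inr.isInducing.continuousOn_image_iff.2 hw₀,
      IsEmbedding.inl.isInducing.continuousOn_image_iff.2 (hw i)]
  have hsum' : (fun μ => ∑ o, lagrangeDual (A' o) (c' o) (w' o) μ) =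
      fun μ => ∑ i, lagrangeDual (A i) (c i) (w i) μ + lagrangeDual B c₀ w₀ μ := by
    ext μ
    simp only [Fintype.sum_option, A', c', w', Option.elim, lagrangeDual_image]
    exact add_comm _ _
  have hconv' : ∀ o, Convex ℝ
      (w' o '' {y ∈ A' o | IsMaxOn (fun z => c' o z - lam ⬝ᵥ w' o z) (A' o) y}) := by
    rintro (_ | i) <;> simp only [A', c', w', Option.elim, image_setOf_isMaxOn_image]
    exacts [hconv₀, hconv i]
  obtain ⟨y', hy', hsum⟩ :=
    exists_isMaxOn_sum_eq_zero_of_isLocalMin hA' hne' hc' hw' (hsum' ▸ hmin) hconv'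
  choose y hyA hyy' using fun i => (hy' (some i)).1
  obtain ⟨z, -, hzy'⟩ := (hy' none).1
  refine ⟨y, z, fun i => ⟨hyA i, (hy' (some i)).2.comp_mapsTo (mapsTo_image _ _) (hyy' i)⟩,
    (hy' none).2.comp_mapsTo (mapsTo_image _ _) hzy', ?_⟩
  rw [Fintype.sum_option, ← hzy'] at hsum
  simp only [← hyy'] at hsum
  rw [add_comm]
  exact hsum

theorem exists_isMaxOn_add_eq_lagrangeDual_add_conjugate {u : (K → ℝ) → ℝ}
    (hA : ∀ i, IsCompact (A i)) (hne : ∀ i, (A i).Nonempty)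
    (hc : ∀ i, ContinuousOn (c i) (A i)) (hw : ∀ i, ContinuousOn (w i) (A i))
    (hu : ConcaveOn ℝ univ u) (hbdd : ∀ μ, BddAbove (range fun z => μ ⬝ᵥ z + u z))
    (hmin : IsLocalMin (fun μ => ∑ i, lagrangeDual (A i) (c i) (w i) μ + conjugate u μ) lam)
    (hconv : ∀ i, Convex ℝ
      (w i '' {y ∈ A i | IsMaxOn (fun z => c i z - lam ⬝ᵥ w i z) (A i) y})) :
    ∃ y : ι → X, (∀ i, y i ∈ A i ∧ IsMaxOn (fun z => c i z - lam ⬝ᵥ w i z) (A i) (y i)) ∧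
      ∑ i, c i (y i) + u (∑ i, w i (y i)) =
        ∑ i, lagrangeDual (A i) (c i) (w i) lam + conjugate u lam := by
  have hucont : Continuous u := continuousOn_univ.1 (hu.continuousOn isOpen_univ)
  obtain ⟨R, hR, hmaxR⟩ := exists_closedBall_isMaxOn_dotProduct_add hbdd hucont lam
  -- near `lam` the conjugate is the dual function of maximising `u` over a fixed ball
  have hmin' : IsLocalMin (fun μ => ∑ i, lagrangeDual (A i) (c i) (w i) μ +
      lagrangeDual (closedBall 0 R) u Neg.neg μ) lam := by
    refine hmin.congr (eventually_of_mem (closedBall_mem_nhds lam one_pos) fun μ hμ => ?_)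
    obtain ⟨z, hz, hmax⟩ := hmaxR μ hμ
    simp only [lagrangeDual_neg_eq_conjugate hbdd hz hmax]
  obtain ⟨y, z, hy, hzmax, hsum⟩ := exists_isMaxOn_sum_add_eq_zero_of_isLocalMin hA hne hc hw
    (isCompact_closedBall 0 R) (nonempty_closedBall.2 hR) hucont.continuousOn
    continuous_neg.continuousOn hmin' hconv
    ((hu.sub_dotProduct_neg (convex_closedBall 0 R) lam).convex_setOf_isMaxOn.linear_image
      (-LinearMap.id))
  obtain ⟨z₀, hz₀, hmax₀⟩ := hmaxR lam (mem_closedBall_self zero_le_one)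
  have hzglobal : IsMaxOn (fun z => lam ⬝ᵥ z + u z) univ z := fun z' _ => by
    have h₀ : lam ⬝ᵥ z' + u z' ≤ lam ⬝ᵥ z₀ + u z₀ := hmax₀ (mem_univ z')
    have h₁ : u z₀ - lam ⬝ᵥ -z₀ ≤ u z - lam ⬝ᵥ -z := hzmax hz₀
    rw [dotProduct_neg, dotProduct_neg] at h₁
    exact (show lam ⬝ᵥ z' + u z' ≤ lam ⬝ᵥ z + u z by linarith)
  refine ⟨y, hy, ?_⟩
  simp only [lagrangeDual_eq_of_isMaxOn (hy _).1 (hy _).2, conjugate_eq_of_isMaxOn hbdd hzglobal,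
    Finset.sum_sub_distrib, ← dotProduct_sum, add_neg_eq_zero.1 hsum]
  ring

end StrongDuality

namespace AdAllocation

variable {I K : Type*} [DecidableEq I] [DecidableEq K] (E : Finset (I × K)) (bbar : I → ℝ)
  (ρ β : I → ℝ → ℝ) (s : I → ℝ) (r : I → K → ℝ)

def surplus (i : I) (z b : ℝ) : ℝ := (z - β i b) * ρ i b

def localUsage (i : I) (x b : K → ℝ) (k : K) : ℝ :=
  if (i, k) ∈ E then r i k * s i * x k * ρ i (b k) else 0

def usage [Fintype I] (x b : I → K → ℝ) (k : K) : ℝ :=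
  ∑ i ∈ Finset.univ.filter (fun i => (i, k) ∈ E), r i k * s i * x i k * ρ i (b i k)

def restrictToEdges (i : I) (xb : (K → ℝ) × (K → ℝ)) : (K → ℝ) × (K → ℝ) :=
  (fun k => if (i, k) ∈ E then xb.1 k else 0, fun k => if (i, k) ∈ E then xb.2 k else 0)

def localBox (i : I) : Set ((K → ℝ) × (K → ℝ)) := Icc 0 (1, fun _ => bbar i)

section

variable {E ρ s r}

theorem localUsage_restrictToEdges (i : I) (xb : (K → ℝ) × (K → ℝ)) :
    localUsage E ρ s r i (restrictToEdges E i xb).1 (restrictToEdges E i xb).2 =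
      localUsage E ρ s r i xb.1 xb.2 := by
  ext k
  by_cases hk : (i, k) ∈ E <;> simp [localUsage, restrictToEdges, hk]

theorem usage_eq_sum [Fintype I] (x b : I → K → ℝ) :
    usage E ρ s r x b = ∑ i, localUsage E ρ s r i (x i) (b i) := by
  ext k
  simp [usage, localUsage, Finset.sum_apply, Finset.sum_filter]

end

variable [Fintype K]

def localFeasible (i : I) : Set ((K → ℝ) × (K → ℝ)) :=
  {xb | (∀ k, (i, k) ∈ E → 0 ≤ xb.1 k) ∧
    (∑ k ∈ Finset.univ.filter (fun k => (i, k) ∈ E), xb.1 k) ≤ 1 ∧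
    (∀ k, (i, k) ∈ E → xb.2 k ∈ Set.Icc (0:ℝ) (bbar i))}

/-- A compact set of local plans: `restrictToEdges` moves every point of `localFeasible` into it
without changing the local objective or usage. -/
def localPlans (i : I) : Set ((K → ℝ) × (K → ℝ)) := localFeasible E bbar i ∩ localBox bbar i

def localObjective (i : I) (lam x b : K → ℝ) : ℝ :=
  ∑ k ∈ Finset.univ.filter (fun k => (i, k) ∈ E),
    surplus ρ β i (r i k * (1 - lam k)) (b k) * s i * x k

def feasible : Set ((I → K → ℝ) × (I → K → ℝ)) :=
  {xb | (∀ i k, 0 ≤ xb.1 i k) ∧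
    (∀ i, (∑ k ∈ Finset.univ.filter (fun k => (i, k) ∈ E), xb.1 i k) ≤ 1) ∧
    (∀ i k, (i, k) ∈ E → xb.2 i k ∈ Set.Icc (0:ℝ) (bbar i))}

def profit (x b : I → K → ℝ) : ℝ :=
  ∑ e ∈ E, surplus ρ β e.1 (r e.1 e.2) (b e.1 e.2) * s e.1 * x e.1 e.2

variable {E bbar ρ β s r}

theorem localObjective_eq_sub (i : I) (lam x b : K → ℝ) :
    localObjective E ρ β s r i lam x b =
      localObjective E ρ β s r i 0 x b - lam ⬝ᵥ localUsage E ρ s r i x b := by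
  simp only [localObjective, localUsage, dotProduct, mul_ite, mul_zero, ← Finset.sum_filter,
    ← Finset.sum_sub_distrib, surplus, Pi.zero_apply]
  exact Finset.sum_congr rfl fun k _ => by ring

theorem localObjective_restrictToEdges (i : I) (lam : K → ℝ) (xb : (K → ℝ) × (K → ℝ)) :
    localObjective E ρ β s r i lam (restrictToEdges E i xb).1 (restrictToEdges E i xb).2 =
      localObjective E ρ β s r i lam xb.1 xb.2 :=
  Finset.sum_congr rfl fun k hk => by
    simp [restrictToEdges, (Finset.mem_filter.1 hk).2]

theorem restrictToEdges_mem_localPlans {i : I} (hbbar : 0 ≤ bbar i) {xb : (K → ℝ) × (K → ℝ)}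
    (hxb : xb ∈ localFeasible E bbar i) : restrictToEdges E i xb ∈ localPlans E bbar i := by
  obtain ⟨hx, hsum, hb⟩ := hxb
  have hsum' : ∑ k ∈ Finset.univ.filter (fun k => (i, k) ∈ E), (restrictToEdges E i xb).1 k =
      ∑ k ∈ Finset.univ.filter (fun k => (i, k) ∈ E), xb.1 k :=
    Finset.sum_congr rfl fun k hk => if_pos (Finset.mem_filter.1 hk).2
  have hx1 : ∀ k, (i, k) ∈ E → xb.1 k ≤ 1 := fun k hk =>
    (Finset.single_le_sum (fun j hj => hx j (Finset.mem_filter.1 hj).2)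
      (Finset.mem_filter.2 ⟨Finset.mem_univ k, hk⟩)).trans hsum
  refine ⟨⟨fun k hk => by simp [restrictToEdges, hk, hx k hk], hsum' ▸ hsum,
    fun k hk => by simp [restrictToEdges, hk, hb k hk]⟩,
    ⟨fun k => ?_, fun k => ?_⟩, ⟨fun k => ?_, fun k => ?_⟩⟩
  all_goals
    simp only [restrictToEdges]
    split_ifs with hk
  exacts [hx k hk, le_rfl, (hb k hk).1, le_rfl, hx1 k hk, zero_le_one, (hb k hk).2, hbbar]

theorem zero_mem_localPlans {i : I} (hbbar : 0 ≤ bbar i) : 0 ∈ localPlans E bbar i :=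
  ⟨⟨fun _ _ => le_rfl, by simp, fun _ _ => ⟨le_rfl, hbbar⟩⟩,
    ⟨le_rfl, fun _ => zero_le_one, fun _ => hbbar⟩⟩

theorem isCompact_localPlans (i : I) : IsCompact (localPlans E bbar i) := by
  refine isCompact_Icc.inter_left ?_
  simp only [localFeasible, ofPred_and, ofPred_forall]
  refine (isClosed_iInter fun k => isClosed_iInter fun _ => isClosed_le continuous_const ?_).inter
    ((isClosed_le ?_ continuous_const).inter
      (isClosed_iInter fun k => isClosed_iInter fun _ => isClosed_Icc.preimage ?_))
  all_goals fun_prop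

theorem mapsTo_localPlans_snd_apply (i : I) (k : K) :
    MapsTo (fun y : (K → ℝ) × (K → ℝ) => y.2 k) (localPlans E bbar i) (Icc 0 (bbar i)) :=
  fun _ hy => ⟨hy.2.1.2 k, hy.2.2.2 k⟩

theorem continuousOn_localObjective {i : I} (hρ : ContinuousOn (ρ i) (Icc 0 (bbar i)))
    (hβ : ContinuousOn (β i) (Icc 0 (bbar i))) (lam : K → ℝ) :
    ContinuousOn (fun y : (K → ℝ) × (K → ℝ) => localObjective E ρ β s r i lam y.1 y.2)
      (localPlans E bbar i) := by
  have hρk : ∀ k, ContinuousOn (fun y : (K → ℝ) × (K → ℝ) => ρ i (y.2 k)) (localPlans E bbar i) :=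
    fun k => hρ.comp (by fun_prop) (mapsTo_localPlans_snd_apply i k)
  have hβk : ∀ k, ContinuousOn (fun y : (K → ℝ) × (K → ℝ) => β i (y.2 k)) (localPlans E bbar i) :=
    fun k => hβ.comp (by fun_prop) (mapsTo_localPlans_snd_apply i k)
  simp only [localObjective, surplus]
  exact continuousOn_finsetSum _ fun k _ =>
    (((continuousOn_const.sub (hβk k)).mul (hρk k)).mul continuousOn_const).mul (by fun_prop)

theorem continuousOn_localUsage {i : I} (hρ : ContinuousOn (ρ i) (Icc 0 (bbar i))) :
    ContinuousOn (fun y : (K → ℝ) × (K → ℝ) => localUsage E ρ s r i y.1 y.2)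
      (localPlans E bbar i) := by
  refine continuousOn_pi.2 fun k => ?_
  by_cases hk : (i, k) ∈ E
  · simp only [localUsage, hk, if_true]
    exact (continuousOn_const.mul (by fun_prop)).mul
      (hρ.comp (by fun_prop) (mapsTo_localPlans_snd_apply i k))
  · simp only [localUsage, hk, if_false]
    exact continuousOn_const

theorem mk_mem_feasible {y : I → (K → ℝ) × (K → ℝ)} (hy : ∀ i, y i ∈ localPlans E bbar i) :
    (fun i => (y i).1, fun i => (y i).2) ∈ feasible E bbar :=
  ⟨fun i k => (hy i).2.1.1 k, fun i => (hy i).1.2.1, fun i k hk => (hy i).1.2.2 k hk⟩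

theorem mem_localFeasible_of_mem_feasible {xb : (I → K → ℝ) × (I → K → ℝ)}
    (hxb : xb ∈ feasible E bbar) (i : I) : (xb.1 i, xb.2 i) ∈ localFeasible E bbar i :=
  ⟨fun k _ => hxb.1 i k, hxb.2.1 i, fun k hk => hxb.2.2 i k hk⟩

theorem image_localUsage_setOf_isMaxOn {i : I} (hbbar : 0 ≤ bbar i) (lam : K → ℝ) :
    (fun z => localUsage E ρ s r i z.1 z.2) '' {y ∈ localPlans E bbar i |
      IsMaxOn (fun z => localObjective E ρ β s r i 0 z.1 z.2 - lam ⬝ᵥ localUsage E ρ s r i z.1 z.2)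
        (localPlans E bbar i) y} =
    {v | ∃ xb ∈ {xb | xb ∈ localFeasible E bbar i ∧ ∀ yb ∈ localFeasible E bbar i,
        localObjective E ρ β s r i lam yb.1 yb.2 ≤ localObjective E ρ β s r i lam xb.1 xb.2},
      v = fun k => localUsage E ρ s r i xb.1 xb.2 k} := by
  simp only [← localObjective_eq_sub]
  ext v
  constructor
  · rintro ⟨y, ⟨hy, hmax⟩, rfl⟩
    refine ⟨y, ⟨hy.1, fun yb hyb => ?_⟩, rfl⟩
    rw [← localObjective_restrictToEdges]
    exact hmax (restrictToEdges_mem_localPlans hbbar hyb)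
  · rintro ⟨xb, ⟨hxb, hmax⟩, rfl⟩
    refine ⟨restrictToEdges E i xb, ⟨restrictToEdges_mem_localPlans hbbar hxb, ?_⟩,
      localUsage_restrictToEdges i xb⟩
    refine isMaxOn_iff.2 fun z hz => ?_
    rw [localObjective_restrictToEdges]
    exact hmax z hz.1

variable [Fintype I]

theorem profit_eq_sum (x b : I → K → ℝ) :
    profit E ρ β s r x b = ∑ i, localObjective E ρ β s r i 0 (x i) (b i) := by
  rw [profit, Finset.sum_finset_product' E Finset.univ
    (fun i => Finset.univ.filter fun k => (i, k) ∈ E) (by simp)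
    (f := fun i k => surplus ρ β i (r i k) (b i k) * s i * x i k)]
  simp [localObjective]

theorem profit_sub_dotProduct_usage (lam : K → ℝ) (x b : I → K → ℝ) :
    profit E ρ β s r x b - lam ⬝ᵥ usage E ρ s r x b =
      ∑ i, localObjective E ρ β s r i lam (x i) (b i) := by
  simp only [profit_eq_sum, usage_eq_sum, dotProduct_sum, ← Finset.sum_sub_distrib,
    ← localObjective_eq_sub]

theorem isMaxOn_feasible_of_isMaxOn_localPlans (hbbar : ∀ i, 0 ≤ bbar i) {lam : K → ℝ}
    {y : I → (K → ℝ) × (K → ℝ)}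
    (hy : ∀ i, IsMaxOn (fun z => localObjective E ρ β s r i 0 z.1 z.2 -
      lam ⬝ᵥ localUsage E ρ s r i z.1 z.2) (localPlans E bbar i) (y i)) :
    IsMaxOn (fun xb => profit E ρ β s r xb.1 xb.2 - lam ⬝ᵥ usage E ρ s r xb.1 xb.2)
      (feasible E bbar) (fun i => (y i).1, fun i => (y i).2) := by
  simp only [← localObjective_eq_sub] at hy
  refine isMaxOn_iff.2 fun xb hxb => ?_
  simp only [profit_sub_dotProduct_usage]
  refine Finset.sum_le_sum fun i _ => ?_
  rw [← localObjective_restrictToEdges i lam (xb.1 i, xb.2 i)]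
  exact hy i (restrictToEdges_mem_localPlans (hbbar i) (mem_localFeasible_of_mem_feasible hxb i))

theorem biSup_feasible_eq_sum_lagrangeDual (hbbar : ∀ i, 0 ≤ bbar i)
    (hρ : ∀ i, ContinuousOn (ρ i) (Icc 0 (bbar i))) (hβ : ∀ i, ContinuousOn (β i) (Icc 0 (bbar i)))
    (lam : K → ℝ) :
    ⨆ xb ∈ feasible E bbar,
        ((profit E ρ β s r xb.1 xb.2 - lam ⬝ᵥ usage E ρ s r xb.1 xb.2 : ℝ) : EReal) =
      ↑(∑ i, lagrangeDual (localPlans E bbar i) (fun z => localObjective E ρ β s r i 0 z.1 z.2)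
        (fun z => localUsage E ρ s r i z.1 z.2) lam) := by
  choose y hyA hymax using fun i => (isCompact_localPlans i).exists_isMaxOn
    ⟨0, zero_mem_localPlans (hbbar i)⟩
    ((continuousOn_localObjective (hρ i) (hβ i) 0).lagrangian (continuousOn_localUsage (hρ i)) lam)
  rw [EReal.biSup_coe_eq_of_isMaxOn (mk_mem_feasible hyA)
      (isMaxOn_feasible_of_isMaxOn_localPlans hbbar hymax),
    EReal.coe_eq_coe_iff, profit_sub_dotProduct_usage]
  exact Finset.sum_congr rfl fun i _ =>
    (localObjective_eq_sub ..).trans (lagrangeDual_eq_of_isMaxOn (hyA i) (hymax i)).symm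

end AdAllocation

open AdAllocation

open scoped BigOperators Classical

theorem stmt_6_general
    {I K : Type*} [Fintype I] [Fintype K] [DecidableEq I] [DecidableEq K]
    (E : Finset (I × K))
    (bbar : I → ℝ) (hbbar : ∀ i, 0 < bbar i)
    (ρ β : I → ℝ → ℝ)
    (s : I → ℝ)
    (r : I → K → ℝ)
    (h : I → ℝ → ℝ → ℝ)
    (hdef : ∀ i z b, h i z b = (z - β i b) * ρ i b)
    (hρcont : ∀ i, ContinuousOn (ρ i) (Set.Icc 0 (bbar i)))
    (hβcont : ∀ i, ContinuousOn (β i) (Set.Icc 0 (bbar i)))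
    (S : Set ((I → K → ℝ) × (I → K → ℝ)))
    (hS : S = {xb | (∀ i k, 0 ≤ xb.1 i k) ∧
      (∀ i, (∑ k ∈ Finset.univ.filter (fun k => (i, k) ∈ E), xb.1 i k) ≤ 1) ∧
      (∀ i k, (i, k) ∈ E → xb.2 i k ∈ Set.Icc (0:ℝ) (bbar i))})
    (prof : (I → K → ℝ) → (I → K → ℝ) → ℝ)
    (hprof : ∀ x b, prof x b = ∑ e ∈ E, h e.1 (r e.1 e.2) (b e.1 e.2) * s e.1 * x e.1 e.2)
    (v : (I → K → ℝ) → (I → K → ℝ) → K → ℝ)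
    (hv : ∀ x b k, v x b k =
      ∑ i ∈ Finset.univ.filter (fun i => (i, k) ∈ E), r i k * s i * x i k * ρ i (b i k))
    (u : (K → ℝ) → ℝ) (hu : ConcaveOn ℝ Set.univ u)
    (p : (K → ℝ) → EReal)
    (hp : ∀ lam, p lam = ⨆ w : K → ℝ, (((∑ k, lam k * w k) + u w : ℝ) : EReal))
    (F : (I → K → ℝ) → (I → K → ℝ) → ℝ)
    (hF : ∀ x b, F x b = prof x b + u (v x b))
    (Q : (K → ℝ) → EReal)
    (hQ : ∀ lam, Q lam =
      (⨆ xb ∈ S, ((prof xb.1 xb.2 - ∑ k, lam k * v xb.1 xb.2 k : ℝ) : EReal)) + p lam)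
    (hpfin : ∀ lam, p lam ≠ ⊤)
    (Si : I → Set ((K → ℝ) × (K → ℝ)))
    (hSi : ∀ i, Si i = {xb | (∀ k, (i, k) ∈ E → 0 ≤ xb.1 k) ∧
      (∑ k ∈ Finset.univ.filter (fun k => (i, k) ∈ E), xb.1 k) ≤ 1 ∧
      (∀ k, (i, k) ∈ E → xb.2 k ∈ Set.Icc (0:ℝ) (bbar i))})
    (obji : I → (K → ℝ) → (K → ℝ) → (K → ℝ) → ℝ)
    (hobji : ∀ i lam x b, obji i lam x b =
      ∑ k ∈ Finset.univ.filter (fun k => (i, k) ∈ E), h i (r i k * (1 - lam k)) (b k) * s i * x k)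
    (Sistar : I → (K → ℝ) → Set ((K → ℝ) × (K → ℝ)))
    (hSistar : ∀ i lam, Sistar i lam =
      {xb | xb ∈ Si i ∧ ∀ yb ∈ Si i, obji i lam yb.1 yb.2 ≤ obji i lam xb.1 xb.2})
    (vi : I → (K → ℝ) → (K → ℝ) → K → ℝ)
    (hvi : ∀ i x b k, vi i x b k = if (i, k) ∈ E then r i k * s i * x k * ρ i (b k) else 0)
    (lamstar : K → ℝ) (hlam : ∀ lam, Q lamstar ≤ Q lam)
    (hVconv : ∀ i, Convex ℝ
      {w : K → ℝ | ∃ xb ∈ Sistar i lamstar, w = fun k => vi i xb.1 xb.2 k}) :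
    ∃ xstar bstar : I → K → ℝ, (xstar, bstar) ∈ S ∧
      (∀ xb ∈ S, prof xb.1 xb.2 - ∑ k, lamstar k * v xb.1 xb.2 k ≤
        prof xstar bstar - ∑ k, lamstar k * v xstar bstar k) ∧
      ((F xstar bstar : ℝ) : EReal) = Q lamstar := by
  obtain rfl : h = surplus ρ β := funext fun i => funext fun z => funext (hdef i z)
  obtain rfl : S = feasible E bbar := by rw [hS]; rfl
  obtain rfl : prof = profit E ρ β s r := funext fun x => funext (hprof x)
  obtain rfl : v = usage E ρ s r := funext fun x => funext fun b => funext (hv x b)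
  obtain rfl : Si = localFeasible E bbar := funext hSi
  obtain rfl : obji = localObjective E ρ β s r :=
    funext fun i => funext fun lam => funext fun x => funext (hobji i lam x)
  obtain rfl : vi = localUsage E ρ s r :=
    funext fun i => funext fun x => funext fun b => funext (hvi i x b)
  simp only [hSistar] at hVconv
  choose hbdd hconj using fun lam => EReal.iSup_coe_eq_coe_ciSup (f := fun z => lam ⬝ᵥ z + u z)
    (by have h := hpfin lam; rw [hp] at h; exact h)
  have hQ' : ∀ lam, Q lam = ↑(∑ i, lagrangeDual (localPlans E bbar i)
      (fun z => localObjective E ρ β s r i 0 z.1 z.2) (fun z => localUsage E ρ s r i z.1 z.2) lam +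
        conjugate u lam) := fun lam => by
    rw [hQ, hp, EReal.coe_add,
      ← biSup_feasible_eq_sum_lagrangeDual (fun i => (hbbar i).le) hρcont hβcont]
    exact congrArg _ (hconj lam)
  obtain ⟨y, hy, hval⟩ := exists_isMaxOn_add_eq_lagrangeDual_add_conjugate
    isCompact_localPlans (fun i => ⟨0, zero_mem_localPlans (hbbar i).le⟩)
    (fun i => continuousOn_localObjective (hρcont i) (hβcont i) 0)
    (fun i => continuousOn_localUsage (hρcont i)) hu hbdd
    (.of_forall fun lam => by simpa only [hQ', EReal.coe_le_coe_iff] using hlam lam)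
    (fun i => by rw [image_localUsage_setOf_isMaxOn (hbbar i).le]; exact hVconv i)
  refine ⟨_, _, mk_mem_feasible fun i => (hy i).1,
    isMaxOn_feasible_of_isMaxOn_localPlans (fun i => (hbbar i).le) fun i => (hy i).2, ?_⟩
  rw [hF, hQ', ← hval, profit_eq_sum, usage_eq_sum]

theorem stmt_6
    {I K : Type*} [Fintype I] [Fintype K] [DecidableEq I] [DecidableEq K]
    (E : Finset (I × K))
    (bbar : I → ℝ) (hbbar : ∀ i, 0 < bbar i)
    (ρ β : I → ℝ → ℝ)
    (hρmono : ∀ i, MonotoneOn (ρ i) (Set.Icc 0 (bbar i)))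
    (hβmono : ∀ i, MonotoneOn (β i) (Set.Icc 0 (bbar i)))
    (hρ01 : ∀ i, ∀ b ∈ Set.Icc (0:ℝ) (bbar i), ρ i b ∈ Set.Icc (0:ℝ) 1)
    (hβb : ∀ i, ∀ b ∈ Set.Icc (0:ℝ) (bbar i), β i b ∈ Set.Icc (0:ℝ) b)
    (s : I → ℝ) (hs : ∀ i, 0 < s i)
    (r : I → K → ℝ) (hr : ∀ i k, (i, k) ∈ E → 0 < r i k)
    (h : I → ℝ → ℝ → ℝ)
    (hdef : ∀ i z b, h i z b = (z - β i b) * ρ i b)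
    (hρcont : ∀ i, ContinuousOn (ρ i) (Set.Icc 0 (bbar i)))
    (hβcont : ∀ i, ContinuousOn (β i) (Set.Icc 0 (bbar i)))
    (S : Set ((I → K → ℝ) × (I → K → ℝ)))
    (hS : S = {xb | (∀ i k, 0 ≤ xb.1 i k) ∧
      (∀ i, (∑ k ∈ Finset.univ.filter (fun k => (i, k) ∈ E), xb.1 i k) ≤ 1) ∧
      (∀ i k, (i, k) ∈ E → xb.2 i k ∈ Set.Icc (0:ℝ) (bbar i))})
    (prof : (I → K → ℝ) → (I → K → ℝ) → ℝ)
    (hprof : ∀ x b, prof x b = ∑ e ∈ E, h e.1 (r e.1 e.2) (b e.1 e.2) * s e.1 * x e.1 e.2)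
    (v : (I → K → ℝ) → (I → K → ℝ) → K → ℝ)
    (hv : ∀ x b k, v x b k =
      ∑ i ∈ Finset.univ.filter (fun i => (i, k) ∈ E), r i k * s i * x i k * ρ i (b i k))
    (u : (K → ℝ) → ℝ) (hu : ConcaveOn ℝ Set.univ u)
    (p : (K → ℝ) → EReal)
    (hp : ∀ lam, p lam = ⨆ w : K → ℝ, (((∑ k, lam k * w k) + u w : ℝ) : EReal))
    (F : (I → K → ℝ) → (I → K → ℝ) → ℝ)
    (hF : ∀ x b, F x b = prof x b + u (v x b))
    (Q : (K → ℝ) → EReal)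
    (hQ : ∀ lam, Q lam =
      (⨆ xb ∈ S, ((prof xb.1 xb.2 - ∑ k, lam k * v xb.1 xb.2 k : ℝ) : EReal)) + p lam)
    (hpfin : ∀ lam, p lam ≠ ⊤)
    (Si : I → Set ((K → ℝ) × (K → ℝ)))
    (hSi : ∀ i, Si i = {xb | (∀ k, (i, k) ∈ E → 0 ≤ xb.1 k) ∧
      (∑ k ∈ Finset.univ.filter (fun k => (i, k) ∈ E), xb.1 k) ≤ 1 ∧
      (∀ k, (i, k) ∈ E → xb.2 k ∈ Set.Icc (0:ℝ) (bbar i))})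
    (obji : I → (K → ℝ) → (K → ℝ) → (K → ℝ) → ℝ)
    (hobji : ∀ i lam x b, obji i lam x b =
      ∑ k ∈ Finset.univ.filter (fun k => (i, k) ∈ E), h i (r i k * (1 - lam k)) (b k) * s i * x k)
    (Sistar : I → (K → ℝ) → Set ((K → ℝ) × (K → ℝ)))
    (hSistar : ∀ i lam, Sistar i lam =
      {xb | xb ∈ Si i ∧ ∀ yb ∈ Si i, obji i lam yb.1 yb.2 ≤ obji i lam xb.1 xb.2})
    (vi : I → (K → ℝ) → (K → ℝ) → K → ℝ)
    (hvi : ∀ i x b k, vi i x b k = if (i, k) ∈ E then r i k * s i * x k * ρ i (b k) else 0)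
    (lamstar : K → ℝ) (hlam : ∀ lam, Q lamstar ≤ Q lam)
    (hVconv : ∀ i, Convex ℝ
      {w : K → ℝ | ∃ xb ∈ Sistar i lamstar, w = fun k => vi i xb.1 xb.2 k}) :
    ∃ xstar bstar : I → K → ℝ, (xstar, bstar) ∈ S ∧
      (∀ xb ∈ S, prof xb.1 xb.2 - ∑ k, lamstar k * v xb.1 xb.2 k ≤
        prof xstar bstar - ∑ k, lamstar k * v xstar bstar k) ∧
      ((F xstar bstar : ℝ) : EReal) = Q lamstar :=
  stmt_6_general E bbar hbbar ρ β s r h hdef hρcont hβcont S hS prof hprof v hv u hu p hp F hF Q hQ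
    hpfin Si hSi obji hobji Sistar hSistar vi hvi lamstar hlam hVconv
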